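/- There exists a strictly 4-sparse 4-cycle system of order 9. -/

import Mathlib

open Finset

/-- The edge set of the 4-cycle `(a, b, c, d)`: edges {a,b}, {b,c}, {c,d}, {d,a}. -/
def cycEdges {V : Type*} [DecidableEq V] (a b c d : V) : Finset (Sym2 V) :=
  {s(a, b), s(b, c), s(c, d), s(d, a)}

/-- `E` is the edge set of a 4-cycle on four distinct vertices. -/
def IsFourCycle {V : Type*} [DecidableEq V] (E : Finset (Sym2 V)) : Prop :=
  ∃ a b c d : V, ([a, b, c, d] : List V).Nodup ∧ E = cycEdges a b c d

/-- The set of vertices covered by a set of edges. -/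
def edgeVerts {V : Type*} [DecidableEq V] (E : Finset (Sym2 V)) : Finset V :=
  E.sup (Sym2.lift ⟨fun x y => ({x, y} : Finset V), fun x y => Finset.pair_comm x y⟩)

/-- A `(k, l)`-configuration: a set of `l` pairwise edge-disjoint 4-cycles whose
union contains exactly `k` vertices. -/
def IsConfiguration {V : Type*} [DecidableEq V] (k l : ℕ)
    (D : Finset (Finset (Sym2 V))) : Prop :=
  D.card = l ∧ (∀ E ∈ D, IsFourCycle E) ∧
    (∀ E ∈ D, ∀ F ∈ D, E ≠ F → Disjoint E F) ∧
    (D.sup edgeVerts).card = k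

/-- `C` is a 4-cycle system: a collection of 4-cycles whose edge sets partition
the edge set of the complete graph on `V`. -/
def IsFourCycleSystem {V : Type*} [DecidableEq V] (C : Finset (Finset (Sym2 V))) : Prop :=
  (∀ E ∈ C, IsFourCycle E) ∧ ∀ e : Sym2 V, ¬ e.IsDiag → ∃! E, E ∈ C ∧ e ∈ E

/-- `C` is a 4-cycle packing: a set of pairwise edge-disjoint 4-cycles. -/
def IsFourCyclePacking {V : Type*} [DecidableEq V] (C : Finset (Finset (Sym2 V))) : Prop :=
  (∀ E ∈ C, IsFourCycle E) ∧ ∀ E ∈ C, ∀ F ∈ C, E ≠ F → Disjoint E F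

/-- `C` is `r`-sparse: it contains no `(j+3, j)`-configuration for `2 ≤ j ≤ r`. -/
def RSparse {V : Type*} [DecidableEq V] (r : ℕ) (C : Finset (Finset (Sym2 V))) : Prop :=
  ∀ j, 2 ≤ j → j ≤ r → ∀ D ⊆ C, ¬ IsConfiguration (j + 3) j D

/-- Two 4-cycles form a double-diamond: they are `(a,b,c,d)` and `(a,e,c,f)`,
sharing the diagonal {a,c}. -/
def IsDoubleDiamond {V : Type*} [DecidableEq V] (E F : Finset (Sym2 V)) : Prop :=
  ∃ a b c d e f : V, ([a, b, c, d, e, f] : List V).Nodup ∧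
    E = cycEdges a b c d ∧ F = cycEdges a e c f

/-- `C` is D-avoiding: no two of its 4-cycles form a double-diamond. -/
def DAvoiding {V : Type*} [DecidableEq V] (C : Finset (Finset (Sym2 V))) : Prop :=
  ∀ E ∈ C, ∀ F ∈ C, ¬ IsDoubleDiamond E F

/-- `C` is strictly `r`-sparse: `r`-sparse and D-avoiding. -/
def StrictlyRSparse {V : Type*} [DecidableEq V] (r : ℕ)
    (C : Finset (Finset (Sym2 V))) : Prop :=
  RSparse r C ∧ DAvoiding C

/-! An explicit system of nine 4-cycles on `Fin 9` works. Any `j` of its cycles with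
`2 ≤ j ≤ 4` cover a number of vertices other than `j + 3`, and two cycles forming a
double-diamond share a diagonal while no two cycles of the system do; both are finite checks
over the nine cycles. -/

open Function

section FourCycles

variable {V : Type*} [DecidableEq V]

theorem isFourCycle_cycEdges {a b c d : V} (h : [a, b, c, d].Nodup) :
    IsFourCycle (cycEdges a b c d) :=
  ⟨a, b, c, d, h, rfl⟩

theorem edgeVerts_cycEdges (a b c d : V) : edgeVerts (cycEdges a b c d) = {a, b, c, d} := by
  ext x
  simp only [edgeVerts, cycEdges, sup_insert, sup_singleton, Sym2.lift_mk, sup_eq_union,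
    mem_union, mem_insert, mem_singleton]
  tauto

/-- For a 4-cycle, its two diagonals. -/
def diagonals (E : Finset (Sym2 V)) : Finset (Sym2 V) :=
  (edgeVerts E).sym2.filter fun e => ¬ e.IsDiag ∧ e ∉ E

theorem mem_diagonals_cycEdges {a b c d : V} (h : [a, b, c, d].Nodup) :
    s(a, c) ∈ diagonals (cycEdges a b c d) := by
  simp only [List.nodup_cons, List.mem_cons, List.not_mem_nil, or_false, not_or] at h
  rw [diagonals, edgeVerts_cycEdges]
  simp only [cycEdges, mem_filter, mem_sym2_iff, Sym2.mem_iff,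
    Sym2.mk_isDiag_iff, mem_insert, mem_singleton, Sym2.eq_iff]
  grind

theorem IsDoubleDiamond.ne {E F : Finset (Sym2 V)} (h : IsDoubleDiamond E F) : E ≠ F := by
  obtain ⟨a, b, c, d, e, f, hnd, rfl, rfl⟩ := h
  intro hEF
  have hab : s(a, b) ∈ cycEdges a e c f := hEF ▸ by simp [cycEdges]
  simp only [List.nodup_cons, List.mem_cons, List.not_mem_nil, or_false, not_or] at hnd
  simp only [cycEdges, mem_insert, mem_singleton, Sym2.eq_iff] at hab
  grind

theorem IsDoubleDiamond.not_disjoint_diagonals {E F : Finset (Sym2 V)}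
    (h : IsDoubleDiamond E F) : ¬ Disjoint (diagonals E) (diagonals F) := by
  obtain ⟨a, b, c, d, e, f, hnd, rfl, rfl⟩ := h
  have habcd : [a, b, c, d].Nodup := hnd.sublist (by simp)
  have haecf : [a, e, c, f].Nodup := by
    simp only [List.nodup_cons, List.mem_cons, List.not_mem_nil, or_false, not_or] at hnd ⊢
    tauto
  exact not_disjoint_iff.mpr
    ⟨s(a, c), mem_diagonals_cycEdges habcd, mem_diagonals_cycEdges haecf⟩

theorem dAvoiding_of_disjoint_diagonals {C : Finset (Finset (Sym2 V))}
    (h : ∀ E ∈ C, ∀ F ∈ C, E ≠ F → Disjoint (diagonals E) (diagonals F)) : DAvoiding C :=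
  fun E hE F hF hEF => hEF.not_disjoint_diagonals (h E hE F hF hEF.ne)

variable {ι : Type*} [Fintype ι] {c : ι → Finset (Sym2 V)}

theorem isFourCycleSystem_image (hc : ∀ i, IsFourCycle (c i))
    (hcover : ∀ e, ¬ e.IsDiag → ∃! i, e ∈ c i) : IsFourCycleSystem (univ.image c) := by
  refine ⟨forall_mem_image.mpr fun i _ => hc i, fun e he => ?_⟩
  obtain ⟨i, hi, huniq⟩ := hcover e he
  refine ⟨c i, ⟨mem_image_of_mem c (mem_univ i), hi⟩, ?_⟩
  rintro _ ⟨hE, heE⟩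
  obtain ⟨j, -, rfl⟩ := mem_image.mp hE
  rw [huniq j heE]

theorem rSparse_image {r : ℕ} (hc : Injective c)
    (h : ∀ I : Finset ι, 2 ≤ #I → #I ≤ r → #(I.sup (edgeVerts ∘ c)) ≠ #I + 3) :
    RSparse r (univ.image c) := by
  rintro j hj2 hjr D hD ⟨hcard, -, -, hverts⟩
  obtain ⟨I, -, rfl⟩ := subset_image_iff.mp hD
  rw [card_image_of_injective I hc] at hcard
  subst hcard
  rw [sup_image] at hverts
  exact h I hj2 hjr hverts

end FourCycles

def nineCycles : Fin 9 → Finset (Sym2 (Fin 9)) :=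
  ![cycEdges 0 1 6 7, cycEdges 0 2 8 4, cycEdges 0 3 7 8, cycEdges 0 5 3 6,
    cycEdges 1 2 4 3, cycEdges 1 4 5 8, cycEdges 1 5 2 7, cycEdges 2 3 8 6,
    cycEdges 4 6 5 7]

theorem nineCycles_isFourCycle (i : Fin 9) : IsFourCycle (nineCycles i) := by
  fin_cases i <;> exact isFourCycle_cycEdges (by decide)

theorem nineCycles_injective : Injective nineCycles := by decide

theorem existsUnique_mem_nineCycles :
    ∀ e : Sym2 (Fin 9), ¬ e.IsDiag → ∃! i, e ∈ nineCycles i := by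
  unfold ExistsUnique
  decide

set_option maxRecDepth 100000 in
theorem card_sup_edgeVerts_nineCycles_ne :
    ∀ I : Finset (Fin 9), 2 ≤ #I → #I ≤ 4 → #(I.sup (edgeVerts ∘ nineCycles)) ≠ #I + 3 := by
  decide

theorem disjoint_diagonals_nineCycles :
    ∀ i j, nineCycles i ≠ nineCycles j →
      Disjoint (diagonals (nineCycles i)) (diagonals (nineCycles j)) := by
  decide

/-- There exists a strictly 4-sparse 4-cycle system of order 9. -/
theorem exists_strictly_four_sparse_order_nine :
    ∃ C : Finset (Finset (Sym2 (Fin 9))), IsFourCycleSystem C ∧ StrictlyRSparse 4 C := by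
  refine ⟨univ.image nineCycles,
    isFourCycleSystem_image nineCycles_isFourCycle existsUnique_mem_nineCycles,
    rSparse_image nineCycles_injective card_sup_edgeVerts_nineCycles_ne, ?_⟩
  refine dAvoiding_of_disjoint_diagonals ?_
  simpa only [forall_mem_image, mem_univ, true_implies] using disjoint_diagonals_nineCycles
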